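/- arXiv:1804.06139 — 4 statements merged into one kernel-verified Lean document; each statement's English description precedes it below -/
import Mathlib

section
/- Let 0 = β_0 < β_1 < β_2 < … be real numbers and X_n ≥ 0 (n = 0,1,2,…). Define A_t = X_{n−1} + (t − β_{n−1}) for t ∈ [β_{n−1}, β_n), n = 1,2,…, and A_peak,n = X_{n−1} + (β_n − β_{n−1}). Fix an integer k ≥ 1 and assume: (i) lim_{n→∞} β_n/n = 1/λ for some λ ∈ (0,∞); (ii) the Cesàro limits m_X = lim_{N→∞} (1/N) Σ_{n=1}^N (X_n)^{k+1} and m_P = lim_{N→∞} (1/N) Σ_{n=1}^N (A_peak,n)^{k+1} exist and are finite. Then lim_{T→∞} (1/T) ∫_0^T (A_t)^k dt exists and equals λ (m_P − m_X)/(k+1). -/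
open Filter Topology MeasureTheory Set

/-!
Between consecutive updates the age grows with slope one, so `∫ A^k` over `[β n, β (n+1)]` is
`(P n ^ (k+1) - X n ^ (k+1)) / (k+1)` with `P n` the peak age. Summing, the integral up to `β N`
divided by `N` tends to `(mP - mX) / (k+1)`, and `β N / N → 1/λ` turns this into the limit along
the update epochs. Since `A ≥ 0` the integral is nondecreasing in `T`, and `β (N+1) / β N → 1`,
so a `T` between two consecutive epochs is squeezed between the values at the epochs.
-/

section NatCastRatio

variable {u : ℕ → ℝ} {c : ℝ}

theorem tendsto_atTop_of_tendsto_div_natCast (hc : 0 < c)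
    (h : Tendsto (fun n => u n / n) atTop (𝓝 c)) : Tendsto u atTop atTop := by
  refine (tendsto_natCast_atTop_atTop.atTop_mul_pos hc h).congr' ?_
  filter_upwards [eventually_ne_atTop 0] with n hn
  exact mul_div_cancel₀ _ (Nat.cast_ne_zero.2 hn)

theorem tendsto_succ_div_of_tendsto_div_natCast (hc : c ≠ 0)
    (h : Tendsto (fun n => u n / n) atTop (𝓝 c)) :
    Tendsto (fun n => u (n + 1) / u n) atTop (𝓝 1) := by
  have hshift : Tendsto (fun n : ℕ => u n / (n + 1)) atTop (𝓝 c) := by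
    refine (mul_one c ▸ h.mul (tendsto_natCast_div_add_atTop (1 : ℝ))).congr' ?_
    filter_upwards [eventually_ne_atTop 0] with n hn
    exact div_mul_div_cancel₀ (Nat.cast_ne_zero.2 hn)
  refine (div_self hc ▸ ((tendsto_add_atTop_iff_nat 1).2 h).div hshift hc).congr' ?_
  filter_upwards [eventually_ne_atTop 0] with n hn
  push_cast
  exact div_div_div_cancel_right₀ (by positivity) _ _

end NatCastRatio

theorem tendsto_sum_range_div_of_tendsto_sum_range_succ_div {a : ℕ → ℝ} {m : ℝ}
    (h : Tendsto (fun N : ℕ => (∑ n ∈ Finset.range N, a (n + 1)) / N) atTop (𝓝 m)) :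
    Tendsto (fun N : ℕ => (∑ n ∈ Finset.range N, a n) / N) atTop (𝓝 m) := by
  rw [← tendsto_add_atTop_iff_nat 1]
  have hfirst : Tendsto (fun N : ℕ => a 0 / ((N : ℝ) + 1)) atTop (𝓝 0) := by
    simpa [Function.comp_def] using
      (tendsto_const_div_atTop_nhds_zero_nat (a 0)).comp (tendsto_add_atTop_nat 1)
  have hlim := hfirst.add (h.mul (tendsto_natCast_div_add_atTop 1))
  rw [zero_add, mul_one] at hlim
  refine hlim.congr' ?_
  filter_upwards [eventually_ne_atTop 0] with N hN
  have : (N : ℝ) ≠ 0 := Nat.cast_ne_zero.2 hN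
  rw [Finset.sum_range_succ']
  push_cast
  field_simp
  ring

theorem exists_mem_Ico_of_tendsto_atTop {β : ℕ → ℝ} (hβ : Tendsto β atTop atTop) {t : ℝ}
    (ht : β 0 ≤ t) : ∃ n, t ∈ Ico (β n) (β (n + 1)) := by
  have hex : ∃ n, t < β (n + 1) :=
    (((tendsto_add_atTop_iff_nat 1).2 hβ).eventually_gt_atTop t).exists
  refine ⟨Nat.find hex, ?_, Nat.find_spec hex⟩
  rcases Nat.eq_zero_or_eq_succ_pred (Nat.find hex) with h | h
  · rwa [h]
  · rw [h]
    exact not_lt.1 (Nat.find_min hex (by omega))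

theorem tendsto_div_of_monotoneOn_of_tendsto_div_nodes {F : ℝ → ℝ} {β : ℕ → ℝ} {L : ℝ}
    (hβ : Monotone β) (hβtop : Tendsto β atTop atTop) (hF : MonotoneOn F (Ici (β 0)))
    (hF0 : 0 ≤ F (β 0)) (hratio : Tendsto (fun n => β (n + 1) / β n) atTop (𝓝 1))
    (hnodes : Tendsto (fun n => F (β n) / β n) atTop (𝓝 L)) :
    Tendsto (fun T => F T / T) atTop (𝓝 L) := by
  have hβpos : ∀ᶠ n in atTop, 0 < β n := hβtop.eventually_gt_atTop 0
  have hmem : ∀ n, β n ∈ Ici (β 0) := fun n => hβ (Nat.zero_le n)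
  choose! N hN using fun T (hT : β 0 ≤ T) => exists_mem_Ico_of_tendsto_atTop hβtop hT
  have hNtop : Tendsto N atTop atTop := tendsto_atTop.2 fun m => by
    filter_upwards [eventually_ge_atTop (β 0), eventually_ge_atTop (β m)] with T h0 hm
    exact Nat.lt_succ_iff.1 (hβ.reflect_lt (hm.trans_lt (hN T h0).2))
  have hlower : Tendsto (fun n => F (β n) / β (n + 1)) atTop (𝓝 L) := by
    refine (div_one L ▸ hnodes.div hratio one_ne_zero).congr' ?_
    filter_upwards [hβpos] with n hn
    exact div_div_div_cancel_right₀ hn.ne' _ _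
  have hupper : Tendsto (fun n => F (β (n + 1)) / β n) atTop (𝓝 L) := by
    refine (mul_one L ▸ ((tendsto_add_atTop_iff_nat 1).2 hnodes).mul hratio).congr' ?_
    filter_upwards [(tendsto_add_atTop_nat 1).eventually hβpos] with n hn
    exact div_mul_div_cancel₀ hn.ne'
  refine tendsto_of_tendsto_of_tendsto_of_le_of_le' (hlower.comp hNtop) (hupper.comp hNtop) ?_ ?_
  all_goals
    filter_upwards [eventually_ge_atTop (β 0), hNtop.eventually hβpos] with T h0 hpos
    obtain ⟨hlo, hhi⟩ := hN T h0
    have hFT : 0 ≤ F T := hF0.trans (hF (hmem 0) h0 h0)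
  · exact div_le_div₀ hFT (hF (hmem _) h0 hlo) (hpos.trans_le hlo) hhi.le
  · exact div_le_div₀ (hFT.trans (hF h0 (hmem _) hhi.le)) (hF h0 (hmem _) hhi.le) hpos hlo

theorem integral_add_sub_pow (a b c : ℝ) (k : ℕ) :
    ∫ t in a..b, (c + (t - a)) ^ k = ((c + (b - a)) ^ (k + 1) - c ^ (k + 1)) / (k + 1) := by
  have hshift : (fun t => (c + (t - a)) ^ k) = fun t => (t - (a - c)) ^ k := by
    funext t; ring
  rw [hshift, intervalIntegral.integral_comp_sub_right (· ^ k), integral_pow]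
  ring_nf

section AgeProcess

variable {β X : ℕ → ℝ} {A : ℝ → ℝ}

theorem age_pow_eqOn_Ioo (hA : ∀ n, ∀ t ∈ Ico (β n) (β (n + 1)), A t = X n + (t - β n))
    (k n : ℕ) :
    EqOn (fun t => A t ^ k) (fun t => (X n + (t - β n)) ^ k) (Ioo (β n) (β (n + 1))) :=
  fun t ht => by simp only [hA n t (Ioo_subset_Ico_self ht)]

theorem intervalIntegrable_age_pow (hβ : Monotone β)
    (hA : ∀ n, ∀ t ∈ Ico (β n) (β (n + 1)), A t = X n + (t - β n)) (k n : ℕ) :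
    IntervalIntegrable (fun t => A t ^ k) volume (β n) (β (n + 1)) := by
  have hcont : Continuous fun t => (X n + (t - β n)) ^ k := by fun_prop
  refine (intervalIntegrable_congr_uIoo ?_).2 (hcont.intervalIntegrable _ _)
  rw [uIoo_of_le (hβ n.le_succ)]
  exact age_pow_eqOn_Ioo hA k n

theorem integral_age_pow (hβ : Monotone β)
    (hA : ∀ n, ∀ t ∈ Ico (β n) (β (n + 1)), A t = X n + (t - β n)) (k n : ℕ) :
    ∫ t in β n..β (n + 1), A t ^ k =
      ((X n + (β (n + 1) - β n)) ^ (k + 1) - X n ^ (k + 1)) / (k + 1) := by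
  rw [intervalIntegral.integral_congr_Ioo_of_le (hβ n.le_succ) (age_pow_eqOn_Ioo hA k n),
    integral_add_sub_pow]

theorem integral_age_pow_eq_sum (hβ : Monotone β)
    (hA : ∀ n, ∀ t ∈ Ico (β n) (β (n + 1)), A t = X n + (t - β n)) (k N : ℕ) :
    ∫ t in β 0..β N, A t ^ k = ∑ n ∈ Finset.range N,
      ((X n + (β (n + 1) - β n)) ^ (k + 1) - X n ^ (k + 1)) / (k + 1) := by
  rw [← intervalIntegral.sum_integral_adjacent_intervals
    fun n _ => intervalIntegrable_age_pow hβ hA k n]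
  exact Finset.sum_congr rfl fun n _ => integral_age_pow hβ hA k n

theorem age_nonneg (hβtop : Tendsto β atTop atTop) (hX : ∀ n, 0 ≤ X n)
    (hA : ∀ n, ∀ t ∈ Ico (β n) (β (n + 1)), A t = X n + (t - β n)) {t : ℝ} (ht : β 0 ≤ t) :
    0 ≤ A t := by
  obtain ⟨n, hn⟩ := exists_mem_Ico_of_tendsto_atTop hβtop ht
  rw [hA n t hn]
  linarith [hX n, hn.1]

theorem monotoneOn_integral_age_pow (hβ : Monotone β) (hβtop : Tendsto β atTop atTop)
    (hX : ∀ n, 0 ≤ X n) (hA : ∀ n, ∀ t ∈ Ico (β n) (β (n + 1)), A t = X n + (t - β n))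
    (k : ℕ) : MonotoneOn (fun T => ∫ t in β 0..T, A t ^ k) (Ici (β 0)) := by
  intro a ha b hb hab
  obtain ⟨N, hN⟩ := (hβtop.eventually_ge_atTop b).exists
  have hint : IntervalIntegrable (fun t => A t ^ k) volume (β 0) b :=
    (IntervalIntegrable.trans_iterate (n := N) fun n _ =>
      intervalIntegrable_age_pow hβ hA k n).mono_set
      (uIcc_subset_uIcc left_mem_uIcc (mem_uIcc_of_le hb hN))
  refine intervalIntegral.integral_mono_interval le_rfl ha hab ?_ hint
  exact ae_restrict_of_forall_mem measurableSet_Ioc fun t ht =>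
    pow_nonneg (age_nonneg hβtop hX hA ht.1.le) k

end AgeProcess

theorem stmt_2_general (β : ℕ → ℝ) (X : ℕ → ℝ) (A : ℝ → ℝ) (k : ℕ)
    (hβ0 : β 0 = 0) (hβmono : StrictMono β)
    (hX : ∀ n, 0 ≤ X n)
    (hA : ∀ n : ℕ, ∀ t ∈ Set.Ico (β n) (β (n + 1)), A t = X n + (t - β n))
    (lam : ℝ) (hlam : 0 < lam)
    (hβlim : Tendsto (fun n : ℕ => β n / n) atTop (𝓝 (1 / lam)))
    (mX mP : ℝ)
    (hmX : Tendsto (fun N : ℕ => (1 / (N : ℝ)) * ∑ n ∈ Finset.range N,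
        (X (n + 1)) ^ (k + 1)) atTop (𝓝 mX))
    (hmP : Tendsto (fun N : ℕ => (1 / (N : ℝ)) * ∑ n ∈ Finset.range N,
        (X n + (β (n + 1) - β n)) ^ (k + 1)) atTop (𝓝 mP)) :
    Tendsto (fun T : ℝ => (1 / T) * ∫ t in (0 : ℝ)..T, (A t) ^ k)
      atTop (𝓝 (lam * (mP - mX) / (k + 1))) := by
  have hβ := hβmono.monotone
  have hβtop := tendsto_atTop_of_tendsto_div_natCast (one_div_pos.2 hlam) hβlim
  simp only [one_div_mul_eq_div] at hmX hmP ⊢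
  have hmX' := tendsto_sum_range_div_of_tendsto_sum_range_succ_div
    (a := fun n => X n ^ (k + 1)) hmX
  have hnodes : Tendsto (fun N : ℕ => (∫ t in β 0..β N, A t ^ k) / β N) atTop
      (𝓝 (lam * (mP - mX) / (k + 1))) := by
    have hlim := ((hmP.sub hmX').div_const ((k : ℝ) + 1)).div hβlim (one_div_ne_zero hlam.ne')
    rw [div_div_eq_mul_div, div_one, mul_comm, ← mul_div_assoc] at hlim
    refine hlim.congr' ?_
    filter_upwards [eventually_ne_atTop 0] with N hN
    have hN' : (N : ℝ) ≠ 0 := Nat.cast_ne_zero.2 hN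
    rw [Pi.div_apply, integral_age_pow_eq_sum hβ hA, ← Finset.sum_div, Finset.sum_sub_distrib,
      ← sub_div, div_right_comm _ (N : ℝ), div_div_div_cancel_right₀ hN']
  simpa only [hβ0] using tendsto_div_of_monotoneOn_of_tendsto_div_nodes hβ hβtop
    (monotoneOn_integral_age_pow hβ hβtop hX hA k) (by simp)
    (tendsto_succ_div_of_tendsto_div_natCast (one_div_ne_zero hlam.ne') hβlim) hnodes

/-- Sample-path moment formula for the age of information: if `β n / n → 1/λ` with
`0 < λ < ∞` and the Cesàro limits `mX` of `(X n)^(k+1)` and `mP` of the `(k+1)`-st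
powers of the peak ages exist, then the time average of `(A t)^k` converges to
`λ (mP - mX) / (k+1)`. -/
theorem stmt_2 (β : ℕ → ℝ) (X : ℕ → ℝ) (A : ℝ → ℝ) (k : ℕ) (hk : 1 ≤ k)
    (hβ0 : β 0 = 0) (hβmono : StrictMono β)
    (hX : ∀ n, 0 ≤ X n)
    (hA : ∀ n : ℕ, ∀ t ∈ Set.Ico (β n) (β (n + 1)), A t = X n + (t - β n))
    (lam : ℝ) (hlam : 0 < lam)
    (hβlim : Tendsto (fun n : ℕ => β n / n) atTop (𝓝 (1 / lam)))
    (mX mP : ℝ)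
    (hmX : Tendsto (fun N : ℕ => (1 / (N : ℝ)) * ∑ n ∈ Finset.range N,
        (X (n + 1)) ^ (k + 1)) atTop (𝓝 mX))
    (hmP : Tendsto (fun N : ℕ => (1 / (N : ℝ)) * ∑ n ∈ Finset.range N,
        (X n + (β (n + 1) - β n)) ^ (k + 1)) atTop (𝓝 mP)) :
    Tendsto (fun T : ℝ => (1 / T) * ∫ t in (0 : ℝ)..T, (A t) ^ k)
      atTop (𝓝 (lam * (mP - mX) / (k + 1))) :=
  stmt_2_general β X A k hβ0 hβmono hX hA lam hlam hβlim mX mP hmX hmP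
end

section
/- Let H be a nonnegative random variable with finite mean E[H] > 0 and LST h*(s) = E[e^{−sH}]. Let λ > 0 and ρ = λE[H] < 1, and suppose D is a nonnegative random variable whose LST is d*(s) = (1−ρ)s h*(s)/(s − λ + λh*(s)) (the Pollaczek–Khinchine system delay transform), G is exponentially distributed with rate λ, and D, G, H are mutually independent. Set A_peak = max(D,G) + H. Then for every s > 0: λ(d*(s) − E[e^{−s A_peak}])/s = ρ d*(s)·(1 − h*(s))/(s E[H]) + d*(s+λ)·(λ/(s+λ))·h*(s) = d*(s) − (1−ρ)s h*(s)/(s + λ h*(s+λ)). -/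
open MeasureTheory ProbabilityTheory Real Set

/-!
For fixed `x ≥ 0`, splitting at `G = x` gives
`E[e^{-s max(x,G)}] = e^{-sx} P(G ≤ x) + λ ∫_x^∞ e^{-(s+λ)y} dy = e^{-sx} - s/(s+λ) e^{-(s+λ)x}`,
so by independence the LST of `max(D,G)` is `d*(s) - s/(s+λ) d*(s+λ)`, and that of
`A_peak = max(D,G) + H` is this times `h*(s)`. Both identities are then algebra after
substituting the Pollaczek–Khinchine formula at `s` and `s + λ`, whose denominator is positive
because `h*(s) ≥ 1 - s E[H]` and `ρ < 1`.
-/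

lemma integral_exp_neg_mul_Ioi {b : ℝ} (hb : 0 < b) (c : ℝ) :
    ∫ y in Ioi c, exp (-(b * y)) = exp (-(b * c)) / b := by
  simp_rw [← neg_mul]
  rw [integral_exp_mul_Ioi (neg_neg_of_pos hb), div_neg, neg_div, neg_neg]

lemma setIntegral_expMeasure_Ioi {r x : ℝ} (hr : 0 ≤ r) (hx : 0 ≤ x) (g : ℝ → ℝ) :
    ∫ y in Ioi x, g y ∂expMeasure r = ∫ y in Ioi x, r * exp (-(r * y)) * g y := by
  have hpdf : expMeasure r = volume.withDensity (exponentialPDF r) := rfl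
  rw [hpdf, setIntegral_withDensity_eq_setIntegral_toReal_smul' (f := exponentialPDF r) _
    (measurable_exponentialPDFReal r).ennreal_ofReal (ae_of_all _ fun _ => ENNReal.ofReal_lt_top)]
  refine setIntegral_congr_fun measurableSet_Ioi fun y (hy : x < y) => ?_
  rw [exponentialPDF_of_nonneg (hx.trans hy.le), smul_eq_mul,
    ENNReal.toReal_ofReal (by positivity)]

lemma integral_exp_neg_mul_max_expMeasure {r s x : ℝ} (hr : 0 < r) (hs : 0 ≤ s) (hx : 0 ≤ x) :
    ∫ y, exp (-(s * max x y)) ∂expMeasure r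
      = exp (-(s * x)) - s / (s + r) * exp (-((s + r) * x)) := by
  have : IsProbabilityMeasure (expMeasure r) := isProbabilityMeasure_expMeasure hr
  have hint : Integrable (fun y => exp (-(s * max x y))) (expMeasure r) := by
    refine Integrable.of_bound (C := 1) (by fun_prop) (ae_of_all _ fun y => ?_)
    rw [norm_of_nonneg (exp_nonneg _), exp_le_one_iff, neg_nonpos]
    exact mul_nonneg hs (hx.trans (le_max_left x y))
  have hle : ∫ y in Iic x, exp (-(s * max x y)) ∂expMeasure r
      = exp (-(s * x)) * (1 - exp (-(r * x))) := by
    rw [setIntegral_congr_fun measurableSet_Iic fun y (hy : y ≤ x) => by rw [max_eq_left hy],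
      setIntegral_const, ← cdf_eq_real, cdf_expMeasure_eq hr, if_pos hx, smul_eq_mul, mul_comm]
  have hgt : ∫ y in Ioi x, exp (-(s * max x y)) ∂expMeasure r
      = r * (exp (-((s + r) * x)) / (s + r)) := by
    rw [setIntegral_expMeasure_Ioi hr.le hx,
      setIntegral_congr_fun measurableSet_Ioi fun y (hy : x < y) => by
        rw [max_eq_right hy.le, mul_assoc, ← exp_add, ← neg_add, ← add_mul, add_comm r s],
      integral_const_mul, integral_exp_neg_mul_Ioi (by positivity)]
  rw [← integral_add_compl measurableSet_Iic hint, compl_Iic, hle, hgt]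
  have hsr : s + r ≠ 0 := by positivity
  have hexp : exp (-(s * x)) * exp (-(r * x)) = exp (-((s + r) * x)) := by
    rw [← exp_add]; ring_nf
  rw [mul_sub, mul_one, hexp]
  field_simp
  ring

section

variable {Ω : Type*} [MeasurableSpace Ω] {μ : Measure Ω}

lemma map_eq_expMeasure_of_cdf [IsProbabilityMeasure μ] {G : Ω → ℝ} (hG : Measurable G)
    {r : ℝ} (hr : 0 < r)
    (hcdf : ∀ x, 0 ≤ x → μ {ω | G ω ≤ x} = ENNReal.ofReal (1 - exp (-(r * x)))) :
    μ.map G = expMeasure r := by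
  have := isProbabilityMeasure_expMeasure hr
  have := Measure.isProbabilityMeasure_map (μ := μ) hG.aemeasurable
  refine Measure.eq_of_cdf _ _ (StieltjesFunction.ext fun x => ?_)
  rw [cdf_expMeasure_eq hr, cdf_eq_real, map_measureReal_apply hG measurableSet_Iic]
  split_ifs with hx
  · change (μ {ω | G ω ≤ x}).toReal = _
    rw [hcdf x hx, ENNReal.toReal_ofReal (sub_nonneg.2 (exp_le_one_iff.2 (by nlinarith)))]
  · have hnull : μ {ω | G ω ≤ x} = 0 := by
      have h0 : μ {ω | G ω ≤ 0} = 0 := by rw [hcdf 0 le_rfl]; simp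
      exact measure_mono_null (fun ω (hω : G ω ≤ x) => hω.trans (not_le.1 hx).le) h0
    change (μ {ω | G ω ≤ x}).toReal = 0
    rw [hnull, ENNReal.toReal_zero]

lemma integrable_exp_neg_mul [IsFiniteMeasure μ] {X : Ω → ℝ} (hX : AEMeasurable X μ)
    (hX0 : ∀ ω, 0 ≤ X ω) {c : ℝ} (hc : 0 ≤ c) :
    Integrable (fun ω => exp (-(c * X ω))) μ := by
  refine Integrable.of_bound (C := 1) (by fun_prop) (ae_of_all _ fun ω => ?_)
  rw [norm_of_nonneg (exp_nonneg _), exp_le_one_iff, neg_nonpos]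
  exact mul_nonneg hc (hX0 ω)

lemma one_sub_mul_integral_le_integral_exp_neg_mul [IsProbabilityMeasure μ] {X : Ω → ℝ}
    (hX : Integrable X μ) {c : ℝ} (hexp : Integrable (fun ω => exp (-(c * X ω))) μ) :
    1 - c * ∫ ω, X ω ∂μ ≤ ∫ ω, exp (-(c * X ω)) ∂μ := by
  calc 1 - c * ∫ ω, X ω ∂μ = ∫ ω, (1 - c * X ω) ∂μ := by
        rw [integral_sub (integrable_const 1) (hX.const_mul c), integral_const_mul]
        simp
    _ ≤ _ := integral_mono ((integrable_const 1).sub (hX.const_mul c)) hexp fun ω => by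
        linarith [add_one_le_exp (-(c * X ω))]

lemma ProbabilityTheory.IndepFun.integral_comp_prod_eq_integral_integral
    {α β E : Type*} [MeasurableSpace α] [MeasurableSpace β] [NormedAddCommGroup E]
    [NormedSpace ℝ E] [IsFiniteMeasure μ] {X : Ω → α} {Y : Ω → β}
    (hXY : IndepFun X Y μ) (hX : AEMeasurable X μ) (hY : AEMeasurable Y μ) {f : α × β → E}
    (hf : StronglyMeasurable f)
    (hfi : Integrable (fun ω => f (X ω, Y ω)) μ) :
    ∫ ω, f (X ω, Y ω) ∂μ = ∫ ω, ∫ y, f (X ω, y) ∂(μ.map Y) ∂μ := by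
  have hmap : μ.map (fun ω => (X ω, Y ω)) = (μ.map X).prod (μ.map Y) :=
    (indepFun_iff_map_prod_eq_prod_map_map hX hY).1 hXY
  have hXY' : AEMeasurable (fun ω => (X ω, Y ω)) μ := hX.prodMk hY
  have hfi' : Integrable f ((μ.map X).prod (μ.map Y)) := by
    rw [← hmap, integrable_map_measure hf.aestronglyMeasurable hXY']
    exact hfi
  rw [← integral_map hXY' hf.aestronglyMeasurable, hmap, integral_prod f hfi',
    integral_map hX hf.integral_prod_right'.aestronglyMeasurable]

lemma integral_exp_neg_mul_max_of_indepFun [IsFiniteMeasure μ] {D G : Ω → ℝ}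
    (hDG : IndepFun D G μ) (hD : Measurable D) (hG : Measurable G) (hD0 : ∀ ω, 0 ≤ D ω)
    {r s : ℝ} (hGlaw : μ.map G = expMeasure r) (hr : 0 < r) (hs : 0 ≤ s) :
    ∫ ω, exp (-(s * max (D ω) (G ω))) ∂μ
      = ∫ ω, exp (-(s * D ω)) ∂μ - s / (s + r) * ∫ ω, exp (-((s + r) * D ω)) ∂μ := by
  have hf : StronglyMeasurable fun p : ℝ × ℝ => exp (-(s * max p.1 p.2)) :=
    (by fun_prop : Continuous fun p : ℝ × ℝ => exp (-(s * max p.1 p.2))).stronglyMeasurable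
  have hmax_int : Integrable (fun ω => exp (-(s * max (D ω) (G ω)))) μ :=
    integrable_exp_neg_mul (hD.max hG).aemeasurable (fun ω => (hD0 ω).trans (le_max_left _ _)) hs
  rw [hDG.integral_comp_prod_eq_integral_integral hD.aemeasurable hG.aemeasurable hf hmax_int,
    hGlaw]
  simp_rw [integral_exp_neg_mul_max_expMeasure hr hs (hD0 _)]
  rw [integral_sub (integrable_exp_neg_mul hD.aemeasurable hD0 hs)
    ((integrable_exp_neg_mul hD.aemeasurable hD0 (by positivity)).const_mul _), integral_const_mul]

lemma integral_exp_neg_mul_add_of_indepFun {X Y : Ω → ℝ} (hXY : IndepFun X Y μ)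
    (hX : AEMeasurable X μ) (hY : AEMeasurable Y μ) (s : ℝ) :
    ∫ ω, exp (-(s * (X ω + Y ω))) ∂μ
      = (∫ ω, exp (-(s * X ω)) ∂μ) * ∫ ω, exp (-(s * Y ω)) ∂μ := by
  have hexp : Measurable fun x : ℝ => exp (-(s * x)) := by fun_prop
  simp_rw [mul_add, neg_add, exp_add]
  exact (hXY.comp hexp hexp).integral_mul_eq_mul_integral (by fun_prop) (by fun_prop)

end

theorem stmt_4_general {Ω : Type*} [MeasurableSpace Ω] (μ : Measure Ω) [IsProbabilityMeasure μ]
    (D G H : Ω → ℝ) (hD : Measurable D) (hG : Measurable G) (hH : Measurable H)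
    (hDpos : ∀ ω, 0 ≤ D ω) (hHpos : ∀ ω, 0 ≤ H ω)
    (hHint : Integrable H μ)
    (EH : ℝ) (hEH : EH = ∫ ω, H ω ∂μ) (hEHpos : 0 < EH)
    (hstar : ℝ → ℝ) (hhstar : ∀ s : ℝ, hstar s = ∫ ω, Real.exp (-(s * H ω)) ∂μ)
    (lam : ℝ) (hlam : 0 < lam) (hρ : lam * EH < 1)
    (dstar : ℝ → ℝ) (hdstar : ∀ s : ℝ, dstar s = ∫ ω, Real.exp (-(s * D ω)) ∂μ)
    (hPK : ∀ s : ℝ, 0 < s →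
      dstar s = (1 - lam * EH) * s * hstar s / (s - lam + lam * hstar s))
    (hGexp : ∀ x : ℝ, 0 ≤ x →
      μ {ω | G ω ≤ x} = ENNReal.ofReal (1 - Real.exp (-(lam * x))))
    (hindep : iIndepFun ![D, G, H] μ) :
    ∀ s : ℝ, 0 < s →
      lam * (dstar s - ∫ ω, Real.exp (-(s * (max (D ω) (G ω) + H ω))) ∂μ) / s =
          (lam * EH) * dstar s * ((1 - hstar s) / (s * EH)) +
            dstar (s + lam) * (lam / (s + lam)) * hstar s ∧
        (lam * EH) * dstar s * ((1 - hstar s) / (s * EH)) +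
            dstar (s + lam) * (lam / (s + lam)) * hstar s =
          dstar s - (1 - lam * EH) * s * hstar s / (s + lam * hstar (s + lam)) := by
  intro s hs
  have hmeas : ∀ i, Measurable (![D, G, H] i) := fun i => by fin_cases i <;> assumption
  have hDG : IndepFun D G μ := by simpa using hindep.indepFun (i := 0) (j := 1) (by decide)
  have hDG_H : IndepFun (fun ω => (D ω, G ω)) H μ := by
    simpa using hindep.indepFun_prodMk hmeas 0 1 2 (by decide) (by decide)
  have hmax : ∫ ω, exp (-(s * max (D ω) (G ω))) ∂μ
      = dstar s - s / (s + lam) * dstar (s + lam) := by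
    rw [integral_exp_neg_mul_max_of_indepFun hDG hD hG hDpos
      (map_eq_expMeasure_of_cdf hG hlam hGexp) hlam hs.le, hdstar, hdstar]
  have hpeak : ∫ ω, exp (-(s * (max (D ω) (G ω) + H ω))) ∂μ
      = (dstar s - s / (s + lam) * dstar (s + lam)) * hstar s := by
    rw [← hmax, hhstar]
    exact integral_exp_neg_mul_add_of_indepFun
      (hDG_H.comp (measurable_fst.max measurable_snd) measurable_id)
      (hD.max hG).aemeasurable hH.aemeasurable s
  have hPK_den : 0 < s - lam + lam * hstar s := by
    have := one_sub_mul_integral_le_integral_exp_neg_mul hHint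
      (integrable_exp_neg_mul hH.aemeasurable hHpos hs.le)
    rw [← hEH, ← hhstar] at this
    nlinarith
  have hAoI_den : 0 < s + lam * hstar (s + lam) := by
    have : 0 ≤ hstar (s + lam) := by rw [hhstar]; exact integral_nonneg fun ω => (exp_pos _).le
    positivity
  refine ⟨?_, ?_⟩
  · rw [hpeak]
    field_simp
    ring
  · rw [hPK s hs, hPK (s + lam) (by positivity), add_sub_cancel_right]
    field_simp
    ring

/-- LST of the stationary AoI in the FCFS M/GI/1 queue: with `h*` the LST of the
service time `H`, `d*` the Pollaczek–Khinchine LST of the system delay `D`, `G`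
exponential with rate `λ`, `D, G, H` mutually independent and `A_peak = max(D,G)+H`,
for every `s > 0`,
`λ(d*(s) - E[e^{-s A_peak}])/s = ρ d*(s)(1-h*(s))/(s E[H]) + d*(s+λ)(λ/(s+λ))h*(s)
  = d*(s) - (1-ρ) s h*(s)/(s + λ h*(s+λ))`. -/
theorem stmt_4 {Ω : Type*} [MeasurableSpace Ω] (μ : Measure Ω) [IsProbabilityMeasure μ]
    (D G H : Ω → ℝ) (hD : Measurable D) (hG : Measurable G) (hH : Measurable H)
    (hDpos : ∀ ω, 0 ≤ D ω) (hGpos : ∀ ω, 0 ≤ G ω) (hHpos : ∀ ω, 0 ≤ H ω)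
    (hHint : Integrable H μ)
    (EH : ℝ) (hEH : EH = ∫ ω, H ω ∂μ) (hEHpos : 0 < EH)
    (hstar : ℝ → ℝ) (hhstar : ∀ s : ℝ, hstar s = ∫ ω, Real.exp (-(s * H ω)) ∂μ)
    (lam : ℝ) (hlam : 0 < lam) (hρ : lam * EH < 1)
    (dstar : ℝ → ℝ) (hdstar : ∀ s : ℝ, dstar s = ∫ ω, Real.exp (-(s * D ω)) ∂μ)
    (hPK : ∀ s : ℝ, 0 < s →
      dstar s = (1 - lam * EH) * s * hstar s / (s - lam + lam * hstar s))
    (hGexp : ∀ x : ℝ, 0 ≤ x →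
      μ {ω | G ω ≤ x} = ENNReal.ofReal (1 - Real.exp (-(lam * x))))
    (hindep : iIndepFun ![D, G, H] μ) :
    ∀ s : ℝ, 0 < s →
      lam * (dstar s - ∫ ω, Real.exp (-(s * (max (D ω) (G ω) + H ω))) ∂μ) / s =
          (lam * EH) * dstar s * ((1 - hstar s) / (s * EH)) +
            dstar (s + lam) * (lam / (s + lam)) * hstar s ∧
        (lam * EH) * dstar s * ((1 - hstar s) / (s * EH)) +
            dstar (s + lam) * (lam / (s + lam)) * hstar s =
          dstar s - (1 - lam * EH) * s * hstar s / (s + lam * hstar (s + lam)) :=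
  stmt_4_general μ D G H hD hG hH hDpos hHpos hHint EH hEH hEHpos hstar hhstar lam hlam hρ dstar
    hdstar hPK hGexp hindep
end

section
/- Let H be a nonnegative random variable with E[H] > 0, E[H²] < ∞, and LST h*(s) = E[e^{−sH}]. Let λ > 0 with ρ = λE[H] < 1, and define for s > 0: d*(s) = (1−ρ)s h*(s)/(s − λ + λh*(s)) and a*(s) = d*(s) − (1−ρ)s h*(s)/(s + λ h*(s+λ)). Then lim_{s→0+} (1 − a*(s))/s = λE[H²]/(2(1−ρ)) + E[H] + (1−ρ)E[H]/(ρ h*(λ)). -/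
/-!
Write `h*(s) = 1 - s E[H] + s² q(s)`. Since `0 ≤ u - 1 + e^{-u} ≤ u²` for `u ≥ 0`, dominated
convergence gives `q(s) → E[H²]/2` as `s → 0+`, and this second-order expansion is exactly what
makes `(1 - d*(s))/s` converge to the Pollaczek–Khinchine mean delay `λE[H²]/(2(1-ρ)) + E[H]`.
The remaining part of `(1 - a*(s))/s` is `(1-ρ) h*(s)/(s + λ h*(s+λ))`, which tends to
`(1-ρ)/(λ h*(λ))` by continuity of `h*` on `[0, ∞)`.
-/

open MeasureTheory Filter Topology

lemma Real.exp_neg_le_one_sub_add_sq {u : ℝ} (hu : 0 ≤ u) :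
    Real.exp (-u) ≤ 1 - u + u ^ 2 := by
  have hpos : (0 : ℝ) < 1 - u + u ^ 2 := by nlinarith [sq_nonneg (u - 1)]
  have hinv : Real.exp (-u) * Real.exp u = 1 := by
    rw [← Real.exp_add, neg_add_cancel, Real.exp_zero]
  nlinarith [mul_le_mul_of_nonneg_left (Real.add_one_le_exp u) hpos.le, Real.exp_pos u]

lemma tendsto_exp_neg_mul_second_order (x : ℝ) :
    Tendsto (fun s : ℝ => (s * x - 1 + Real.exp (-(s * x))) / s ^ 2) (𝓝[≠] 0)
      (𝓝 (x ^ 2 / 2)) := by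
  have hlin : Tendsto (fun s : ℝ => -(s * x)) (𝓝 0) (𝓝 0) := by
    simpa using ((tendsto_id (x := 𝓝 (0 : ℝ))).mul_const x).neg
  have hrem := ((Real.exp_sub_sum_range_succ_isLittleO_pow 2).comp_tendsto hlin).trans_isBigO
    (g := fun s : ℝ => (-(s * x)) ^ 2) (k := fun s : ℝ => s ^ 2)
    (Asymptotics.isBigO_of_le' (c := x ^ 2) _ fun s => by simp [mul_pow, mul_comm])
  have hlim := hrem.tendsto_div_nhds_zero.add_const (x ^ 2 / 2)
  rw [zero_add] at hlim
  refine (hlim.mono_left nhdsWithin_le_nhds).congr' ?_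
  filter_upwards [self_mem_nhdsWithin] with s (hs : s ≠ 0)
  simp only [Function.comp_apply, Finset.sum_range_succ, Finset.sum_range_zero]
  field_simp
  norm_num
  ring

section LaplaceStieltjes

variable {Ω : Type*} [MeasurableSpace Ω] {μ : Measure Ω} {H : Ω → ℝ}

lemma norm_exp_neg_mul_le_one (hH : ∀ᵐ ω ∂μ, 0 ≤ H ω) {s : ℝ} (hs : 0 ≤ s) :
    ∀ᵐ ω ∂μ, ‖Real.exp (-(s * H ω))‖ ≤ 1 := by
  filter_upwards [hH] with ω hω
  rw [Real.norm_of_nonneg (Real.exp_pos _).le, Real.exp_le_one_iff, neg_nonpos]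
  positivity

lemma integrable_exp_neg_mul_s5 [IsFiniteMeasure μ] (hm : AEStronglyMeasurable H μ)
    (hH : ∀ᵐ ω ∂μ, 0 ≤ H ω) {s : ℝ} (hs : 0 ≤ s) :
    Integrable (fun ω => Real.exp (-(s * H ω))) μ :=
  (integrable_const (1 : ℝ)).mono' (by fun_prop) (norm_exp_neg_mul_le_one hH hs)

lemma continuousOn_integral_exp_neg_mul [IsFiniteMeasure μ] (hm : AEStronglyMeasurable H μ)
    (hH : ∀ᵐ ω ∂μ, 0 ≤ H ω) :
    ContinuousOn (fun s => ∫ ω, Real.exp (-(s * H ω)) ∂μ) (Set.Ici 0) :=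
  continuousOn_of_dominated (fun _ _ => by fun_prop)
    (fun _ hs => norm_exp_neg_mul_le_one hH hs) (integrable_const 1)
    (ae_of_all _ fun _ => by fun_prop)

lemma tendsto_integral_exp_neg_mul_second_order [IsProbabilityMeasure μ]
    (hH : ∀ᵐ ω ∂μ, 0 ≤ H ω) (hH1 : Integrable H μ)
    (hH2 : Integrable (fun ω => H ω ^ 2) μ) :
    Tendsto
      (fun s : ℝ => (s * ∫ ω, H ω ∂μ - 1 + ∫ ω, Real.exp (-(s * H ω)) ∂μ) / s ^ 2)
      (𝓝[>] 0) (𝓝 ((∫ ω, H ω ^ 2 ∂μ) / 2)) := by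
  have hm := hH1.aestronglyMeasurable
  have hbound : ∀ s : ℝ, 0 < s → ∀ x : ℝ, 0 ≤ x →
      ‖(s * x - 1 + Real.exp (-(s * x))) / s ^ 2‖ ≤ x ^ 2 := by
    intro s hs x hx
    have hu : 0 ≤ s * x := by positivity
    have hlo := Real.add_one_le_exp (-(s * x))
    have hhi := Real.exp_neg_le_one_sub_add_sq hu
    rw [Real.norm_of_nonneg (by apply div_nonneg <;> [linarith; positivity]),
      div_le_iff₀ (by positivity)]
    linarith [mul_pow s x 2]
  have hdct : Tendsto (fun s : ℝ => ∫ ω, (s * H ω - 1 + Real.exp (-(s * H ω))) / s ^ 2 ∂μ)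
      (𝓝[>] 0) (𝓝 (∫ ω, H ω ^ 2 / 2 ∂μ)) :=
    tendsto_integral_filter_of_dominated_convergence (fun ω => H ω ^ 2)
      (Eventually.of_forall fun _ => by fun_prop)
      (eventually_mem_nhdsWithin.mono fun s hs => hH.mono fun ω hω => hbound s hs (H ω) hω) hH2
      (ae_of_all _ fun ω => (tendsto_exp_neg_mul_second_order (H ω)).mono_left
        (nhdsWithin_mono _ fun _ h => ne_of_gt h))
  rw [integral_div] at hdct
  refine hdct.congr' (eventually_mem_nhdsWithin.mono fun s (hs : 0 < s) => ?_)
  have hlin : Integrable (fun ω => s * H ω - 1) μ := (hH1.const_mul s).sub (integrable_const 1)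
  rw [integral_div, integral_add hlin (integrable_exp_neg_mul_s5 hm hH hs.le),
    integral_sub (hH1.const_mul s) (integrable_const 1), integral_const_mul, integral_const]
  simp

end LaplaceStieltjes

lemma tendsto_one_sub_pollaczekKhinchine_div {f : ℝ → ℝ} {m m₂ lam : ℝ}
    (hρ : lam * m ≠ 1)
    (hf : Tendsto (fun s => (s * m - 1 + f s) / s ^ 2) (𝓝[>] 0) (𝓝 (m₂ / 2))) :
    Tendsto (fun s => (1 - (1 - lam * m) * s * f s / (s - lam + lam * f s)) / s) (𝓝[>] 0)
      (𝓝 (lam * m₂ / (2 * (1 - lam * m)) + m)) := by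
  set q := fun s => (s * m - 1 + f s) / s ^ 2
  have hρ' : 1 - lam * m ≠ 0 := sub_ne_zero.mpr hρ.symm
  have hsq : Tendsto (fun s => s * q s) (𝓝[>] 0) (𝓝 0) := by
    simpa using (tendsto_nhdsWithin_of_tendsto_nhds tendsto_id).mul hf
  have hD : Tendsto (fun s => 1 - lam * m + lam * (s * q s)) (𝓝[>] 0) (𝓝 (1 - lam * m)) := by
    simpa using tendsto_const_nhds.add (hsq.const_mul lam)
  have hlim := ((hf.const_mul lam).add
    (((tendsto_const_nhds (x := m)).sub hsq).const_mul (1 - lam * m))).div hD hρ'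
  convert hlim.congr' ?_ using 2
  · field_simp
    ring
  filter_upwards [self_mem_nhdsWithin, hD.eventually_ne hρ'] with s (hs : 0 < s) hDs
  have hfq : f s = 1 - s * m + s ^ 2 * q s := by simp only [q]; field_simp; ring
  have hfact : s - lam + lam * f s = s * (1 - lam * m + lam * (s * q s)) := by rw [hfq]; ring
  rw [Pi.div_apply, hfact, hfq, one_sub_div (mul_ne_zero hs.ne' hDs), div_div,
    div_eq_div_iff hDs (by simp [hs.ne', hDs])]
  ring

theorem stmt_5_general {Ω : Type*} [MeasurableSpace Ω] (μ : Measure Ω) [IsProbabilityMeasure μ]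
    (H : Ω → ℝ) (hHpos : ∀ ω, 0 ≤ H ω)
    (hHint : Integrable H μ) (hH2int : Integrable (fun ω => H ω ^ 2) μ)
    (EH EH2 : ℝ) (hEH : EH = ∫ ω, H ω ∂μ) (hEH2 : EH2 = ∫ ω, H ω ^ 2 ∂μ)
    (hEHpos : 0 < EH)
    (hstar : ℝ → ℝ) (hhstar : ∀ s : ℝ, hstar s = ∫ ω, Real.exp (-(s * H ω)) ∂μ)
    (lam : ℝ) (hlam : 0 < lam) (hρ : lam * EH < 1)
    (dstar astar : ℝ → ℝ)
    (hdstar : ∀ s : ℝ, 0 < s →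
      dstar s = (1 - lam * EH) * s * hstar s / (s - lam + lam * hstar s))
    (hastar : ∀ s : ℝ, 0 < s →
      astar s = dstar s - (1 - lam * EH) * s * hstar s / (s + lam * hstar (s + lam))) :
    Tendsto (fun s : ℝ => (1 - astar s) / s) (𝓝[>] 0)
      (𝓝 (lam * EH2 / (2 * (1 - lam * EH)) + EH +
        (1 - lam * EH) * EH / ((lam * EH) * hstar lam))) := by
  have hH : ∀ᵐ ω ∂μ, 0 ≤ H ω := ae_of_all _ hHpos
  have hcont : ContinuousOn hstar (Set.Ici 0) :=
    funext hhstar ▸ continuousOn_integral_exp_neg_mul hHint.aestronglyMeasurable hH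
  have hstar_lam_pos : 0 < hstar lam :=
    hhstar lam ▸ integral_exp_pos (integrable_exp_neg_mul_s5 hHint.aestronglyMeasurable hH hlam.le)
  have hdelay : Tendsto (fun s => (1 - dstar s) / s) (𝓝[>] 0)
      (𝓝 (lam * EH2 / (2 * (1 - lam * EH)) + EH)) :=
    (tendsto_one_sub_pollaczekKhinchine_div hρ.ne (by
      simpa only [← hhstar, ← hEH, ← hEH2] using
        tendsto_integral_exp_neg_mul_second_order hH hHint hH2int)).congr'
      (eventually_mem_nhdsWithin.mono fun s hs =>
        congrArg (fun d => (1 - d) / s) (hdstar s hs).symm)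
  have hstar_zero : Tendsto hstar (𝓝[>] 0) (𝓝 1) := by
    simpa [hhstar] using
      (hcont 0 Set.self_mem_Ici).tendsto.mono_left (nhdsWithin_mono _ Set.Ioi_subset_Ici_self)
  have hstar_shift : Tendsto (fun s => hstar (s + lam)) (𝓝[>] 0) (𝓝 (hstar lam)) :=
    (hcont.continuousAt (Ici_mem_nhds hlam)).tendsto.comp
      (((continuous_add_const lam).tendsto' 0 lam (zero_add lam)).mono_left nhdsWithin_le_nhds)
  have hcorrection : Tendsto (fun s => (1 - lam * EH) * hstar s / (s + lam * hstar (s + lam)))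
      (𝓝[>] 0) (𝓝 ((1 - lam * EH) * 1 / (0 + lam * hstar lam))) :=
    (hstar_zero.const_mul _).div
      ((tendsto_nhdsWithin_of_tendsto_nhds tendsto_id).add (hstar_shift.const_mul lam))
      (by positivity)
  convert (hdelay.add hcorrection).congr' ?_ using 2
  · field_simp
    ring
  filter_upwards [self_mem_nhdsWithin] with s (hs : 0 < s)
  rw [hastar s hs]
  field_simp
  ring

/-- Mean AoI in the FCFS M/GI/1 queue: with `h*` the LST of the service time `H`,
`d*` the Pollaczek–Khinchine delay LST, and `a*` the AoI LST
`a*(s) = d*(s) - (1-ρ) s h*(s)/(s + λ h*(s+λ))`, one has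
`lim_{s→0+} (1 - a*(s))/s = λE[H²]/(2(1-ρ)) + E[H] + (1-ρ)E[H]/(ρ h*(λ))`. -/
theorem stmt_5 {Ω : Type*} [MeasurableSpace Ω] (μ : Measure Ω) [IsProbabilityMeasure μ]
    (H : Ω → ℝ) (hH : Measurable H) (hHpos : ∀ ω, 0 ≤ H ω)
    (hHint : Integrable H μ) (hH2int : Integrable (fun ω => H ω ^ 2) μ)
    (EH EH2 : ℝ) (hEH : EH = ∫ ω, H ω ∂μ) (hEH2 : EH2 = ∫ ω, H ω ^ 2 ∂μ)
    (hEHpos : 0 < EH)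
    (hstar : ℝ → ℝ) (hhstar : ∀ s : ℝ, hstar s = ∫ ω, Real.exp (-(s * H ω)) ∂μ)
    (lam : ℝ) (hlam : 0 < lam) (hρ : lam * EH < 1)
    (dstar astar : ℝ → ℝ)
    (hdstar : ∀ s : ℝ, 0 < s →
      dstar s = (1 - lam * EH) * s * hstar s / (s - lam + lam * hstar s))
    (hastar : ∀ s : ℝ, 0 < s →
      astar s = dstar s - (1 - lam * EH) * s * hstar s / (s + lam * hstar (s + lam))) :
    Tendsto (fun s : ℝ => (1 - astar s) / s) (𝓝[>] 0)
      (𝓝 (lam * EH2 / (2 * (1 - lam * EH)) + EH +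
        (1 - lam * EH) * EH / ((lam * EH) * hstar lam))) :=
  stmt_5_general μ H hHpos hHint hH2int EH EH2 hEH hEH2 hEHpos hstar hhstar lam hlam hρ dstar astar
    hdstar hastar
end

section
/- Let G be a nonnegative random variable with 0 < E[G] < ∞ and E[G²] < ∞, let μ > 0 with ρ := 1/(μ E[G]) < 1, and let γ ∈ (0,1) satisfy γ = E[e^{−(μ−μγ)G}]. Write g*(μ) = E[e^{−μG}], g¹ = E[G e^{−μG}], g² = E[G² e^{−μG}], and g¹_γ = E[G e^{−(μ−μγ)G}]. Define A_P = E[G²]/(2E[G]) + 1/μ, A_NPW = 1/μ + E[G²]/(2E[G]) + ρ·( g¹ + μ g*(μ) g² /(1 − μ g¹) ), A_NPWO = 1/μ + E[G²]/(2E[G]) + ρ g¹_γ, and A_FCFS = E[G²]/(2E[G]) + 1/μ + (ρ/(1−γ))·g¹_γ. Then A_P ≤ A_NPW ≤ A_NPWO ≤ A_FCFS. -/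
open MeasureTheory

/-!
Two elementary bounds on the exponential do all the work. From `x e^{-x} ≤ e^{-1} < 1` we get
`μ g¹ < 1`. Integrating `e^{μγG} ≥ 1 + μγG` against `e^{-μG}` and `G e^{-μG}` gives
`γ ≥ g*(μ) + μγ g¹` and `g¹_γ ≥ g¹ + μγ g²`. The first bounds the correction term of `A_NPW`
by `μγ g²`, the second then gives `A_NPW ≤ A_NPWO`, and `A_NPWO ≤ A_FCFS` is `1 ≤ 1/(1-γ)`.
-/

lemma Real.one_add_mul_mul_exp_neg_le (a b x : ℝ) :
    (1 + b * x) * Real.exp (-(a * x)) ≤ Real.exp (-((a - b) * x)) := by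
  have hsplit : Real.exp (-((a - b) * x)) = Real.exp (b * x) * Real.exp (-(a * x)) := by
    rw [← Real.exp_add]; ring_nf
  rw [hsplit, add_comm]
  exact mul_le_mul_of_nonneg_right (Real.add_one_le_exp _) (Real.exp_pos _).le

section Laplace

variable {Ω : Type*} [MeasurableSpace Ω] {P : Measure Ω} {G f : Ω → ℝ}

lemma MeasureTheory.Integrable.mul_exp_neg_mul (hf : Integrable f P)
    (hG : AEStronglyMeasurable G P) (hG0 : 0 ≤ᵐ[P] G) {c : ℝ} (hc : 0 ≤ c) :
    Integrable (fun ω => f ω * Real.exp (-(c * G ω))) P := by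
  have hexp := Real.continuous_exp.comp_aestronglyMeasurable (hG.const_mul c).neg
  refine hf.mul_bdd (c := 1) hexp ?_
  filter_upwards [hG0] with ω hω
  rw [Real.norm_eq_abs, abs_of_pos (Real.exp_pos _), Real.exp_le_one_iff, neg_nonpos]
  exact mul_nonneg hc hω

lemma integrable_exp_neg_mul_s17 [IsFiniteMeasure P] (hG : AEStronglyMeasurable G P)
    (hG0 : 0 ≤ᵐ[P] G) {c : ℝ} (hc : 0 ≤ c) :
    Integrable (fun ω => Real.exp (-(c * G ω))) P := by
  simpa only [one_mul] using (integrable_const (1 : ℝ)).mul_exp_neg_mul hG hG0 hc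

lemma mul_integral_mul_exp_neg_mul_lt_one [IsProbabilityMeasure P] {c : ℝ}
    (hint : Integrable (fun ω => G ω * Real.exp (-(c * G ω))) P) :
    c * ∫ ω, G ω * Real.exp (-(c * G ω)) ∂P < 1 := by
  rw [← integral_const_mul]
  calc ∫ ω, c * (G ω * Real.exp (-(c * G ω))) ∂P
      ≤ ∫ _, Real.exp (-1) ∂P := by
        refine integral_mono (hint.const_mul c) (integrable_const _) fun ω => ?_
        simpa only [mul_assoc] using Real.mul_exp_neg_le_exp_neg_one (c * G ω)
    _ = Real.exp (-1) := by simp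
    _ < 1 := Real.exp_lt_one_iff.mpr (by norm_num)

lemma integral_mul_exp_neg_add_mul_le (hf0 : 0 ≤ᵐ[P] f) (a b : ℝ)
    (h₁ : Integrable (fun ω => f ω * Real.exp (-(a * G ω))) P)
    (h₂ : Integrable (fun ω => f ω * G ω * Real.exp (-(a * G ω))) P)
    (h₃ : Integrable (fun ω => f ω * Real.exp (-((a - b) * G ω))) P) :
    ∫ ω, f ω * Real.exp (-(a * G ω)) ∂P + b * ∫ ω, f ω * G ω * Real.exp (-(a * G ω)) ∂P
      ≤ ∫ ω, f ω * Real.exp (-((a - b) * G ω)) ∂P := by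
  rw [← integral_const_mul, ← integral_add h₁ (h₂.const_mul b)]
  refine integral_mono_ae (h₁.add (h₂.const_mul b)) h₃ ?_
  filter_upwards [hf0] with ω hω
  calc f ω * Real.exp (-(a * G ω)) + b * (f ω * G ω * Real.exp (-(a * G ω)))
      = f ω * ((1 + b * G ω) * Real.exp (-(a * G ω))) := by ring
    _ ≤ f ω * Real.exp (-((a - b) * G ω)) :=
        mul_le_mul_of_nonneg_left (Real.one_add_mul_mul_exp_neg_le _ _ _) hω

variable (hGint : Integrable G P) (hG0 : 0 ≤ᵐ[P] G) {a b : ℝ} (ha : 0 ≤ a) (hab : 0 ≤ a - b)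
include hGint hG0 ha hab

lemma integral_exp_neg_add_mul_le [IsFiniteMeasure P] :
    ∫ ω, Real.exp (-(a * G ω)) ∂P + b * ∫ ω, G ω * Real.exp (-(a * G ω)) ∂P
      ≤ ∫ ω, Real.exp (-((a - b) * G ω)) ∂P := by
  have hG := hGint.aestronglyMeasurable
  simpa only [one_mul] using integral_mul_exp_neg_add_mul_le (G := G) (f := fun _ => 1)
    (ae_of_all P fun _ => zero_le_one) a b
    (by simpa only [one_mul] using integrable_exp_neg_mul_s17 hG hG0 ha)
    (by simpa only [one_mul] using hGint.mul_exp_neg_mul hG hG0 ha)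
    (by simpa only [one_mul] using integrable_exp_neg_mul_s17 hG hG0 hab)

lemma integral_self_mul_exp_neg_add_mul_le (hG2int : Integrable (fun ω => G ω ^ 2) P) :
    ∫ ω, G ω * Real.exp (-(a * G ω)) ∂P + b * ∫ ω, G ω ^ 2 * Real.exp (-(a * G ω)) ∂P
      ≤ ∫ ω, G ω * Real.exp (-((a - b) * G ω)) ∂P := by
  have hG := hGint.aestronglyMeasurable
  simpa only [← sq] using integral_mul_exp_neg_add_mul_le hG0 a b
    (hGint.mul_exp_neg_mul hG hG0 ha)
    (by simpa only [← sq] using hG2int.mul_exp_neg_mul hG hG0 ha)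
    (hGint.mul_exp_neg_mul hG hG0 hab)

end Laplace

lemma mul_mul_div_one_sub_le {m γ s g₁ g₂ : ℝ} (hm : 0 ≤ m) (hg₂ : 0 ≤ g₂) (hg₁ : m * g₁ < 1)
    (hs : s + m * γ * g₁ ≤ γ) :
    m * s * g₂ / (1 - m * g₁) ≤ m * γ * g₂ := by
  rw [div_le_iff₀ (sub_pos.mpr hg₁)]
  nlinarith [mul_nonneg hm hg₂]

theorem stmt_17_general {Ω : Type*} [MeasurableSpace Ω] (P : Measure Ω) [IsProbabilityMeasure P]
    (G : Ω → ℝ) (hGpos : ∀ ω, 0 ≤ G ω)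
    (hGint : Integrable G P) (hG2int : Integrable (fun ω => G ω ^ 2) P)
    (EG EG2 : ℝ)
    (hEGpos : 0 < EG)
    (mu : ℝ) (hmu : 0 < mu)
    (ρ : ℝ) (hρdef : ρ = 1 / (mu * EG))
    (γ : ℝ) (hγ : γ ∈ Set.Ioo (0 : ℝ) 1)
    (hγfix : γ = ∫ ω, Real.exp (-((mu - mu * γ) * G ω)) ∂P)
    (gstarmu g1 g2 g1γ : ℝ)
    (hgstarmu : gstarmu = ∫ ω, Real.exp (-(mu * G ω)) ∂P)
    (hg1 : g1 = ∫ ω, G ω * Real.exp (-(mu * G ω)) ∂P)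
    (hg2 : g2 = ∫ ω, G ω ^ 2 * Real.exp (-(mu * G ω)) ∂P)
    (hg1γ : g1γ = ∫ ω, G ω * Real.exp (-((mu - mu * γ) * G ω)) ∂P)
    (AP ANPW ANPWO AFCFS : ℝ)
    (hAP : AP = EG2 / (2 * EG) + 1 / mu)
    (hANPW : ANPW = 1 / mu + EG2 / (2 * EG) +
      ρ * (g1 + mu * gstarmu * g2 / (1 - mu * g1)))
    (hANPWO : ANPWO = 1 / mu + EG2 / (2 * EG) + ρ * g1γ)
    (hAFCFS : AFCFS = EG2 / (2 * EG) + 1 / mu + (ρ / (1 - γ)) * g1γ) :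
    AP ≤ ANPW ∧ ANPW ≤ ANPWO ∧ ANPWO ≤ AFCFS := by
  obtain ⟨hγ0, hγ1⟩ := hγ
  have hG0 : 0 ≤ᵐ[P] G := ae_of_all P hGpos
  have hβ : 0 ≤ mu - mu * γ := by nlinarith
  have hg1_lt : mu * g1 < 1 :=
    hg1 ▸ mul_integral_mul_exp_neg_mul_lt_one
      (hGint.mul_exp_neg_mul hGint.aestronglyMeasurable hG0 hmu.le)
  have hgstar_le : gstarmu + mu * γ * g1 ≤ γ := by
    simpa only [← hgstarmu, ← hg1, ← hγfix] using
      integral_exp_neg_add_mul_le hGint hG0 hmu.le hβ (b := mu * γ)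
  have hg1γ_ge : g1 + mu * γ * g2 ≤ g1γ := by
    simpa only [← hg1, ← hg2, ← hg1γ] using
      integral_self_mul_exp_neg_add_mul_le hGint hG0 hmu.le hβ hG2int (b := mu * γ)
  have hρ0 : 0 ≤ ρ := by rw [hρdef]; positivity
  have hgstar0 : 0 ≤ gstarmu := hgstarmu ▸ integral_nonneg fun _ => (Real.exp_pos _).le
  have hg1_0 : 0 ≤ g1 := hg1 ▸ integral_nonneg fun ω => mul_nonneg (hGpos ω) (Real.exp_pos _).le
  have hg2_0 : 0 ≤ g2 := hg2 ▸ integral_nonneg fun ω => mul_nonneg (sq_nonneg _) (Real.exp_pos _).le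
  have hg1γ0 : 0 ≤ g1γ :=
    hg1γ ▸ integral_nonneg fun ω => mul_nonneg (hGpos ω) (Real.exp_pos _).le
  have hcorr := mul_mul_div_one_sub_le hmu.le hg2_0 hg1_lt hgstar_le
  have hcorr0 : 0 ≤ mu * gstarmu * g2 / (1 - mu * g1) :=
    div_nonneg (by positivity) (sub_pos.mpr hg1_lt).le
  refine ⟨?_, ?_, ?_⟩
  · rw [hAP, hANPW]
    linarith [mul_nonneg hρ0 (add_nonneg hg1_0 hcorr0)]
  · rw [hANPW, hANPWO]
    gcongr
    linarith
  · rw [hANPWO, hAFCFS]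
    have hρ_le : ρ ≤ ρ / (1 - γ) := le_div_self hρ0 (by linarith) (by linarith)
    linarith [mul_le_mul_of_nonneg_right hρ_le hg1γ0]

/-- Mean-AoI ordering in the stationary GI/M/1 queue with interarrival time `G`,
exponential service rate `μ`, `ρ = 1/(μE[G]) < 1`, and `γ ∈ (0,1)` the root of
`γ = E[e^{-(μ-μγ)G}]`: the mean AoI under preemptive LCFS, non-preemptive LCFS with
discarding, non-preemptive LCFS without discarding, and FCFS satisfy
`A_P ≤ A_NPW ≤ A_NPWO ≤ A_FCFS`. -/
theorem stmt_17 {Ω : Type*} [MeasurableSpace Ω] (P : Measure Ω) [IsProbabilityMeasure P]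
    (G : Ω → ℝ) (hG : Measurable G) (hGpos : ∀ ω, 0 ≤ G ω)
    (hGint : Integrable G P) (hG2int : Integrable (fun ω => G ω ^ 2) P)
    (EG EG2 : ℝ) (hEG : EG = ∫ ω, G ω ∂P) (hEG2 : EG2 = ∫ ω, G ω ^ 2 ∂P)
    (hEGpos : 0 < EG)
    (mu : ℝ) (hmu : 0 < mu)
    (ρ : ℝ) (hρdef : ρ = 1 / (mu * EG)) (hρ : ρ < 1)
    (γ : ℝ) (hγ : γ ∈ Set.Ioo (0 : ℝ) 1)
    (hγfix : γ = ∫ ω, Real.exp (-((mu - mu * γ) * G ω)) ∂P)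
    (gstarmu g1 g2 g1γ : ℝ)
    (hgstarmu : gstarmu = ∫ ω, Real.exp (-(mu * G ω)) ∂P)
    (hg1 : g1 = ∫ ω, G ω * Real.exp (-(mu * G ω)) ∂P)
    (hg2 : g2 = ∫ ω, G ω ^ 2 * Real.exp (-(mu * G ω)) ∂P)
    (hg1γ : g1γ = ∫ ω, G ω * Real.exp (-((mu - mu * γ) * G ω)) ∂P)
    (AP ANPW ANPWO AFCFS : ℝ)
    (hAP : AP = EG2 / (2 * EG) + 1 / mu)
    (hANPW : ANPW = 1 / mu + EG2 / (2 * EG) +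
      ρ * (g1 + mu * gstarmu * g2 / (1 - mu * g1)))
    (hANPWO : ANPWO = 1 / mu + EG2 / (2 * EG) + ρ * g1γ)
    (hAFCFS : AFCFS = EG2 / (2 * EG) + 1 / mu + (ρ / (1 - γ)) * g1γ) :
    AP ≤ ANPW ∧ ANPW ≤ ANPWO ∧ ANPWO ≤ AFCFS :=
  stmt_17_general P G hGpos hGint hG2int EG EG2 hEGpos mu hmu ρ hρdef γ hγ hγfix gstarmu g1 g2 g1γ
    hgstarmu hg1 hg2 hg1γ AP ANPW ANPWO AFCFS hAP hANPW hANPWO hAFCFS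
end
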